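/- Let a ∈ ℂ be nonzero. Then the evaluation map ñ₊ → g sending x⊗g(t) to g(a)·x (for x ∈ g and g(t) ∈ ℂ[t] with x⊗g(t) ∈ ñ₊) is a surjective Lie algebra homomorphism with kernel I(t−a); hence it induces a Lie algebra isomorphism ñ₊/I(t−a) ≅ g. -/

import Mathlib

/- Common framework for formalizing statements from
   "Irreducible modules over affine Kac–Moody algebras which are locally finite
    over the positive part" (Guo–Zhao).

   Conventions:
   * `g` is a finite-dimensional simple complex Lie algebra.
   * The loop algebra `g ⊗ ℂ[t,t⁻¹]` is modelled by the vector space `ℤ →₀ g`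
     (`Finsupp.single p x` corresponds to `x ⊗ tᵖ`).
   * The affine algebra `ĝ = g ⊗ ℂ[t,t⁻¹] ⊕ ℂK` is any Lie algebra equipped with
     an `AffineAlg` structure (a linear equivalence with `(ℤ →₀ g) × ℂ` fixing the
     bracket on generators, where `(0,1)` is the central element `K`).
   * Similarly `t̃g = ĝ ⊕ ℂd` is any Lie algebra with an `AffineAlgD` structure on
     `(ℤ →₀ g) × ℂ × ℂ`, where `(0,1,0) = K` and `(0,0,1) = d`.
   * The current algebra `g ⊗ ℂ[t]` is `Polynomial ℂ ⊗[ℂ] g`, and the positive part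
     `ñ₊ = (g ⊗ tℂ[t]) ⊕ (n₊ ⊗ 1)` is any Lie algebra `nt` with an `NtAlg` structure:
     an injective Lie algebra morphism into the current algebra with range `ñ₊`.
   * Induced modules are specified by structures that pin them down uniquely up to
     isomorphism (`IndModule` via the PBW description `ℂ[d] ⊗ M`, and universal
     properties for induction from `ñ₊`).
-/

open scoped TensorProduct
open Polynomial

noncomputable section

namespace AffinePaper

variable (g : Type) [LieRing g] [LieAlgebra ℂ g]

/-- The current algebra `g ⊗ ℂ[t]` is a complex Lie algebra. -/
instance : LieAlgebra ℂ (Polynomial ℂ ⊗[ℂ] g) where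
  lie_smul c x y := by
    rw [← algebraMap_smul (Polynomial ℂ) c y, ← algebraMap_smul (Polynomial ℂ) c ⁅x, y⁆]
    exact lie_smul (algebraMap ℂ (Polynomial ℂ) c) x y

/-- The weight space of `ad H` on `g` for a functional `α` on a subalgebra `H`. -/
def wtSpace (H : LieSubalgebra ℂ g) (α : Module.Dual ℂ H) : Submodule ℂ g where
  carrier := {x : g | ∀ h : H, ⁅(h : g), x⁆ = α h • x}
  add_mem' := fun {a b} ha hb h => by rw [lie_add, ha h, hb h, smul_add]
  zero_mem' := fun h => by rw [lie_zero, smul_zero]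
  smul_mem' := fun c x hx h => by rw [lie_smul, hx h]; exact smul_comm c (α h) x

/-- `α` is a root of `(g, H)`. -/
def IsRootOf (H : LieSubalgebra ℂ g) (α : Module.Dual ℂ H) : Prop :=
  α ≠ 0 ∧ wtSpace g H α ≠ ⊥

/-- A triangular decomposition `g = n₋ ⊕ h ⊕ n₊` of `g` relative to a Cartan
subalgebra `H`, given by a positive system `P` of roots. -/
structure TriangularData where
  H : LieSubalgebra ℂ g
  nPos : LieSubalgebra ℂ g
  nNeg : LieSubalgebra ℂ g
  isCartan : H.IsCartanSubalgebra
  P : Set (Module.Dual ℂ H)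
  pos_isRoot : ∀ α ∈ P, IsRootOf g H α
  pos_neg : ∀ α, IsRootOf g H α → (α ∈ P ↔ -α ∉ P)
  nPos_eq : nPos.toSubmodule = ⨆ α ∈ P, wtSpace g H α
  nNeg_eq : nNeg.toSubmodule = ⨆ α ∈ P, wtSpace g H (-α)
  triang : nNeg.toSubmodule ⊔ H.toSubmodule ⊔ nPos.toSubmodule = ⊤

variable {g}

/-- The simple roots of a positive system: the positive roots that are not sums of
two positive roots. -/
def TriangularData.simpleRoots (D : TriangularData g) : Set (Module.Dual ℂ D.H) :=
  {α | α ∈ D.P ∧ ¬∃ β ∈ D.P, ∃ γ ∈ D.P, α = β + γ}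

/-- `θ` is the highest root. -/
def TriangularData.IsHighestRoot (D : TriangularData g) (θ : Module.Dual ℂ D.H) : Prop :=
  θ ∈ D.P ∧ ∀ α ∈ D.P, ¬ IsRootOf g D.H (θ + α)

/-- `lam ∈ h*` is dominant integral: it takes nonnegative integer values on all
coroots (elements `hc = ⁅e, f⁆ ∈ [g_α, g_{-α}]` with `α hc = 2`, `α` positive). -/
def IsDominantIntegral (D : TriangularData g) (lam : Module.Dual ℂ D.H) : Prop :=
  ∀ α ∈ D.P, ∀ (e f : g) (hc : D.H), e ∈ wtSpace g D.H α → f ∈ wtSpace g D.H (-α) →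
    ⁅e, f⁆ = (hc : g) → α hc = 2 → ∃ n : ℕ, lam hc = (n : ℂ)

variable (g)

/-- The subspace `I(f) = n₊ ⊗ f ℂ[t] + (h ⊕ n₋) ⊗ t f ℂ[t]` of the current algebra. -/
def idealI (D : TriangularData g) (f : Polynomial ℂ) : Submodule ℂ (Polynomial ℂ ⊗[ℂ] g) :=
  Submodule.span ℂ
    ({z | ∃ x ∈ D.nPos, ∃ p : Polynomial ℂ, z = (f * p) ⊗ₜ[ℂ] x} ∪
     {z | ∃ x : g, x ∈ D.H.toSubmodule ⊔ D.nNeg.toSubmodule ∧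
        ∃ p : Polynomial ℂ, z = (X * f * p) ⊗ₜ[ℂ] x})

/-- The subspace `Σ_{α∈Δ₊∖Π} g_α ⊗ fℂ[t] + Σ_{α∈Π} g_α ⊗ tfℂ[t] +
Σ_{α∈Δ₊∖{θ}} g_{−α} ⊗ tfℂ[t] + g_{−θ} ⊗ t²fℂ[t] + h ⊗ tfℂ[t]` of the current
algebra (`θ` the highest root); for `f = 1` this is the subspace `K` of Lemma 4.2. -/
def bigK (D : TriangularData g) (θ : Module.Dual ℂ D.H) (f : Polynomial ℂ) :
    Submodule ℂ (Polynomial ℂ ⊗[ℂ] g) :=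
  Submodule.span ℂ
    ({z | ∃ α ∈ D.P, α ∉ D.simpleRoots ∧
        ∃ x ∈ wtSpace g D.H α, ∃ p : Polynomial ℂ, z = (f * p) ⊗ₜ[ℂ] x} ∪
     {z | ∃ α ∈ D.simpleRoots,
        ∃ x ∈ wtSpace g D.H α, ∃ p : Polynomial ℂ, z = (X * f * p) ⊗ₜ[ℂ] x} ∪
     {z | ∃ α ∈ D.P, α ≠ θ ∧
        ∃ x ∈ wtSpace g D.H (-α), ∃ p : Polynomial ℂ, z = (X * f * p) ⊗ₜ[ℂ] x} ∪
     {z | ∃ x ∈ wtSpace g D.H (-θ), ∃ p : Polynomial ℂ, z = (X ^ 2 * f * p) ⊗ₜ[ℂ] x} ∪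
     {z | ∃ x ∈ D.H, ∃ p : Polynomial ℂ, z = (X * f * p) ⊗ₜ[ℂ] x})

/-- The subspace of the current algebra corresponding to
`ñ₊ = (g ⊗ tℂ[t]) ⊕ (n₊ ⊗ 1)`. -/
def ntModel (D : TriangularData g) : Submodule ℂ (Polynomial ℂ ⊗[ℂ] g) :=
  Submodule.span ℂ
    ({z | ∃ (k : ℕ) (x : g), 1 ≤ k ∧ z = (X ^ k : Polynomial ℂ) ⊗ₜ[ℂ] x} ∪
     {z | ∃ x ∈ D.nPos, z = (1 : Polynomial ℂ) ⊗ₜ[ℂ] x})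

/-- A realization of the Lie algebra `ñ₊`: a Lie algebra `nt` together with an
injective morphism to the current algebra with range `(g ⊗ tℂ[t]) ⊕ (n₊ ⊗ 1)`. -/
structure NtAlg (D : TriangularData g) (nt : Type) [LieRing nt] [LieAlgebra ℂ nt] where
  ι : nt →ₗ⁅ℂ⁆ Polynomial ℂ ⊗[ℂ] g
  inj : Function.Injective ι
  range_eq : LinearMap.range (ι.toLinearMap) = ntModel g D

/-- Evaluation of the current algebra at a point `a ∈ ℂ`: `x ⊗ p(t) ↦ p(a) • x`. -/
def ev (a : ℂ) : (Polynomial ℂ ⊗[ℂ] g) →ₗ[ℂ] g :=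
  (TensorProduct.lid ℂ g).toLinearMap ∘ₗ
    (TensorProduct.map (Polynomial.aeval a).toLinearMap LinearMap.id)

/-- The canonical embedding of the current algebra `g ⊗ ℂ[t]` into the model
`ℤ →₀ g` of the loop algebra `g ⊗ ℂ[t,t⁻¹]` (sending `x ⊗ tᵏ` to `single k x`). -/
def toLoop : (Polynomial ℂ ⊗[ℂ] g) →ₗ[ℂ] (ℤ →₀ g) :=
  (Finsupp.lmapDomain g ℂ (Nat.cast : ℕ → ℤ)) ∘ₗ
    (TensorProduct.finsuppScalarLeft ℂ g ℕ).toLinearMap ∘ₗ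
    (TensorProduct.congr ((Polynomial.toFinsuppIsoAlg ℂ).toLinearEquiv.trans
        (AddMonoidAlgebra.coeffLinearEquiv ℂ))
      (LinearEquiv.refl ℂ g)).toLinearMap

/-- A weight vector of `ñ₊` (viewed inside the current algebra): a nonzero element
`x ⊗ tᵏ` with `x` in `h` or in a root space. -/
def IsWeightVec (D : TriangularData g) (w : Polynomial ℂ ⊗[ℂ] g) : Prop :=
  w ≠ 0 ∧ ∃ (k : ℕ) (x : g), w = (X ^ k : Polynomial ℂ) ⊗ₜ[ℂ] x ∧
    (x ∈ D.H ∨ ∃ α, IsRootOf g D.H α ∧ x ∈ wtSpace g D.H α)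

/-- An element `z` of a Lie algebra `L` acts locally finitely on a module `V`. -/
def ActsLocallyFinitely (L : Type) [LieRing L] (V : Type) [AddCommGroup V] [Module ℂ V]
    [LieRingModule L V] (z : L) : Prop :=
  ∀ v : V, ∃ W : Submodule ℂ V, v ∈ W ∧ FiniteDimensional ℂ W ∧ ∀ w ∈ W, ⁅z, w⁆ ∈ W

/-- A realization of the affine Lie algebra `ĝ = (g ⊗ ℂ[t,t⁻¹]) ⊕ ℂK` (without
derivation): a Lie algebra `gh` with a linear equivalence `e` with the model space
`(ℤ →₀ g) × ℂ` such that `e (single p x, 0) = x ⊗ tᵖ`, `e (0,1) = K` is central, and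
`[x ⊗ tᵖ, y ⊗ t^q] = [x,y] ⊗ t^{p+q} + p δ_{p+q,0} κ(x,y) K`, `κ` the Killing form. -/
structure AffineAlg (gh : Type) [LieRing gh] [LieAlgebra ℂ gh] where
  e : ((ℤ →₀ g) × ℂ) ≃ₗ[ℂ] gh
  brkt : ∀ (p q : ℤ) (x y : g),
    ⁅e (Finsupp.single p x, 0), e (Finsupp.single q y, 0)⁆ =
      e (Finsupp.single (p + q) ⁅x, y⁆,
        if p + q = 0 then (p : ℂ) * killingForm ℂ g x y else 0)
  central : ∀ z : gh, ⁅e (0, 1), z⁆ = 0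

/-- A realization of the affine Kac–Moody algebra `t̃g = (g ⊗ ℂ[t,t⁻¹]) ⊕ ℂK ⊕ ℂd`:
as in `AffineAlg`, with moreover `e (0,0,1) = d` satisfying `[d, x ⊗ tᵖ] = p x ⊗ tᵖ`. -/
structure AffineAlgD (gt : Type) [LieRing gt] [LieAlgebra ℂ gt] where
  e : ((ℤ →₀ g) × ℂ × ℂ) ≃ₗ[ℂ] gt
  brkt : ∀ (p q : ℤ) (x y : g),
    ⁅e (Finsupp.single p x, 0, 0), e (Finsupp.single q y, 0, 0)⁆ =
      e (Finsupp.single (p + q) ⁅x, y⁆,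
        (if p + q = 0 then (p : ℂ) * killingForm ℂ g x y else 0), 0)
  central : ∀ z : gt, ⁅e (0, 1, 0), z⁆ = 0
  dBrkt : ∀ (p : ℤ) (x : g),
    ⁅e (0, 0, 1), e (Finsupp.single p x, 0, 0)⁆ = e (Finsupp.single p ((p : ℂ) • x), 0, 0)

variable {g}

/-- `V` is the irreducible highest weight `g`-module with highest weight `lam`:
it is irreducible and has a highest weight vector of weight `lam`. -/
structure IsHWModule (D : TriangularData g) (lam : Module.Dual ℂ D.H) (V : Type)
    [AddCommGroup V] [Module ℂ V] [LieRingModule g V] [LieModule ℂ g V] where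
  v₀ : V
  ne : v₀ ≠ 0
  hwN : ∀ x ∈ D.nPos, ⁅x, v₀⁆ = 0
  hwH : ∀ h : D.H, ⁅(h : g), v₀⁆ = lam h • v₀
  irred : IsSimpleOrder (LieSubmodule ℂ g V)

/-- `E` is the evaluation module `E(λ, a) = V₁ ⊗ ⋯ ⊗ V_m` over `ĝ`:
`(x ⊗ tᵏ) · (v₁ ⊗ ⋯ ⊗ v_m) = Σᵢ aᵢᵏ v₁ ⊗ ⋯ ⊗ (x · vᵢ) ⊗ ⋯ ⊗ v_m`, and `K` acts by `0`. -/
structure EvalModule {gh : Type} [LieRing gh] [LieAlgebra ℂ gh] (A : AffineAlg g gh)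
    {m : ℕ} (a : Fin m → ℂ) (V : Fin m → Type) [∀ i, AddCommGroup (V i)]
    [∀ i, Module ℂ (V i)] [∀ i, LieRingModule g (V i)] [∀ i, LieModule ℂ g (V i)]
    (E : Type) [AddCommGroup E] [Module ℂ E] [LieRingModule gh E] [LieModule ℂ gh E] where
  ψ : E ≃ₗ[ℂ] PiTensorProduct ℂ V
  act : ∀ (k : ℤ) (x : g) (v : ∀ i, V i),
    ⁅A.e (Finsupp.single k x, 0), ψ.symm (PiTensorProduct.tprod ℂ v)⁆ =
      ∑ i, (a i) ^ k • ψ.symm (PiTensorProduct.tprod ℂ (Function.update v i ⁅x, v i⁆))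
  kAct : ∀ w : E, ⁅A.e (0, 1), w⁆ = 0

/-- `V` is the `t̃g`-module `M[d] = Ind_{ĝ}^{t̃g} M` induced from a `ĝ`-module `M`.
As a vector space `M[d] = ℂ[d] ⊗ M` (modelled by `ℕ →₀ M`, `single n v = dⁿ ⊗ v`);
`d` shifts the degree and `ĝ` acts on `d⁰ ⊗ M` as on `M`.  These data determine the
`t̃g`-module structure uniquely. -/
structure IndModule {gh gt : Type} [LieRing gh] [LieAlgebra ℂ gh] [LieRing gt]
    [LieAlgebra ℂ gt] (T : AffineAlgD g gt) (A : AffineAlg g gh)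
    (M : Type) [AddCommGroup M] [Module ℂ M] [LieRingModule gh M]
    (V : Type) [AddCommGroup V] [Module ℂ V] [LieRingModule gt V] where
  φ : (ℕ →₀ M) ≃ₗ[ℂ] V
  dAct : ∀ (n : ℕ) (v : M),
    ⁅T.e (0, 0, 1), φ (Finsupp.single n v)⁆ = φ (Finsupp.single (n + 1) v)
  rest : ∀ (u : (ℤ →₀ g) × ℂ) (v : M),
    ⁅T.e (u.1, u.2, 0), φ (Finsupp.single 0 v)⁆ = φ (Finsupp.single 0 ⁅A.e u, v⁆)

attribute [local instance 100] LieRing.ofAssociativeRing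

/-- `S` is the `ñ₊`-module `S(η, λ, a) = ℂ v_η ⊗ L(λ₁) ⊗ ⋯ ⊗ L(λ_m)`:
`(x ⊗ p(t)) · (v₁ ⊗ ⋯ ⊗ v_m) = η(x ⊗ p(t)) (v₁ ⊗ ⋯ ⊗ v_m) + Σᵢ p(aᵢ) v₁ ⊗ ⋯ ⊗ (x vᵢ) ⊗ ⋯ ⊗ v_m`. -/
structure SModule {nt : Type} [LieRing nt] [LieAlgebra ℂ nt] {D : TriangularData g}
    (NT : NtAlg g D nt) (η : nt →ₗ⁅ℂ⁆ ℂ) {m : ℕ} (a : Fin m → ℂ)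
    (V : Fin m → Type) [∀ i, AddCommGroup (V i)] [∀ i, Module ℂ (V i)]
    [∀ i, LieRingModule g (V i)]
    (S : Type) [AddCommGroup S] [Module ℂ S] [LieRingModule nt S] where
  ψ : S ≃ₗ[ℂ] PiTensorProduct ℂ V
  act : ∀ (z : nt) (v : ∀ i, V i),
    ⁅z, ψ.symm (PiTensorProduct.tprod ℂ v)⁆ = η z • ψ.symm (PiTensorProduct.tprod ℂ v) +
      ∑ i, ψ.symm (PiTensorProduct.tprod ℂ (Function.update v i ⁅ev g (a i) (NT.ι z), v i⁆))

/-- `V` is the irreducible highest weight `ĝ`-module with highest weight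
`γ ∈ (h ⊕ ℂK)*`. -/
structure HWModuleAff {gh : Type} [LieRing gh] [LieAlgebra ℂ gh] (A : AffineAlg g gh)
    (D : TriangularData g) (γ : Module.Dual ℂ (↥D.H × ℂ)) (V : Type)
    [AddCommGroup V] [Module ℂ V] [LieRingModule gh V] [LieModule ℂ gh V] where
  v₀ : V
  ne : v₀ ≠ 0
  hwLoop : ∀ k : ℕ, 1 ≤ k → ∀ x : g, ⁅A.e (Finsupp.single (k : ℤ) x, 0), v₀⁆ = 0
  hwN : ∀ x ∈ D.nPos, ⁅A.e (Finsupp.single 0 x, 0), v₀⁆ = 0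
  hwH : ∀ (h : D.H) (c : ℂ), ⁅A.e (Finsupp.single 0 (h : g), c), v₀⁆ = γ (h, c) • v₀
  irred : IsSimpleOrder (LieSubmodule ℂ gh V)

/-- `W` is an irreducible Whittaker `ĝ`-module of type `η : ñ₊ → ℂ`. -/
structure WhittakerAff {gh : Type} [LieRing gh] [LieAlgebra ℂ gh] (A : AffineAlg g gh)
    {D : TriangularData g} {nt : Type} [LieRing nt] [LieAlgebra ℂ nt] (NT : NtAlg g D nt)
    (η : nt →ₗ⁅ℂ⁆ ℂ) (W : Type)
    [AddCommGroup W] [Module ℂ W] [LieRingModule gh W] [LieModule ℂ gh W] where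
  v₀ : W
  ne : v₀ ≠ 0
  wh : ∀ z : nt, ⁅A.e (toLoop g (NT.ι z), 0), v₀⁆ = η z • v₀
  irred : IsSimpleOrder (LieSubmodule ℂ gh W)

/-- `MS` is the induced `ĝ`-module `Ind_{ñ₊}^{ĝ} S`, characterized by its universal
property. -/
structure IndFromNt {gh : Type} [LieRing gh] [LieAlgebra ℂ gh] (A : AffineAlg g gh)
    {D : TriangularData g} {nt : Type} [LieRing nt] [LieAlgebra ℂ nt] (NT : NtAlg g D nt)
    (S : Type) [AddCommGroup S] [Module ℂ S] [LieRingModule nt S]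
    (MS : Type) [AddCommGroup MS] [Module ℂ MS] [LieRingModule gh MS]
    [LieModule ℂ gh MS] where
  ι₀ : S →ₗ[ℂ] MS
  compat : ∀ (z : nt) (s : S), ⁅A.e (toLoop g (NT.ι z), 0), ι₀ s⁆ = ι₀ ⁅z, s⁆
  univ : ∀ (W : Type) [AddCommGroup W] [Module ℂ W] [LieRingModule gh W]
    [LieModule ℂ gh W] (f : S →ₗ[ℂ] W),
    (∀ (z : nt) (s : S), ⁅A.e (toLoop g (NT.ι z), 0), f s⁆ = f ⁅z, s⁆) →
    ∃! F : MS →ₗ⁅ℂ,gh⁆ W, F.toLinearMap ∘ₗ ι₀ = f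

/-- `M0` is the universal Whittaker module `M(η) = Ind_{ñ₊}^{ĝ} ℂ_η`, characterized
by its universal property. -/
structure UnivWhittaker {gh : Type} [LieRing gh] [LieAlgebra ℂ gh] (A : AffineAlg g gh)
    {D : TriangularData g} {nt : Type} [LieRing nt] [LieAlgebra ℂ nt] (NT : NtAlg g D nt)
    (η : nt →ₗ⁅ℂ⁆ ℂ) (M0 : Type) [AddCommGroup M0] [Module ℂ M0] [LieRingModule gh M0]
    [LieModule ℂ gh M0] where
  u₀ : M0
  rel : ∀ z : nt, ⁅A.e (toLoop g (NT.ι z), 0), u₀⁆ = η z • u₀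
  univ : ∀ (W : Type) [AddCommGroup W] [Module ℂ W] [LieRingModule gh W]
    [LieModule ℂ gh W] (w : W),
    (∀ z : nt, ⁅A.e (toLoop g (NT.ι z), 0), w⁆ = η z • w) →
    ∃! F : M0 →ₗ⁅ℂ,gh⁆ W, F u₀ = w

variable (g)

/-- A bundled Lie module over a complex Lie algebra `L`. -/
structure LieModOf (L : Type) [LieRing L] [LieAlgebra ℂ L] : Type 1 where
  carrier : Type
  [ac : AddCommGroup carrier]
  [mo : Module ℂ carrier]
  [lrm : LieRingModule L carrier]
  [lm : LieModule ℂ L carrier]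

attribute [instance] LieModOf.ac LieModOf.mo LieModOf.lrm LieModOf.lm

/-! Evaluation at `a` is a Lie homomorphism because the current algebra has the bracket
`⁅p ⊗ x, q ⊗ y⁆ = pq ⊗ ⁅x, y⁆`. For `a ≠ 0` it is onto, as `t ⊗ a⁻¹x ∈ ñ₊` maps to `x`.
Every `w ∈ ñ₊` is congruent to `t ⊗ a⁻¹ ev_a(w)` modulo `I(t - a)`, which gives the kernel:
on a generator `p ⊗ x` of `ñ₊` the difference is `q ⊗ x` with `q = p - a⁻¹ p(a) t`, and `q`
vanishes at `a`, and also at `0` unless `p = 1`, in which case `x ∈ n₊`. -/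

theorem _root_.TensorProduct.lid_map_algHom_lie {R A L : Type*} [CommRing R] [CommRing A]
    [Algebra R A] [LieRing L] [LieAlgebra R L] (φ : A →ₐ[R] R) (u v : A ⊗[R] L) :
    TensorProduct.lid R L (TensorProduct.map φ.toLinearMap LinearMap.id ⁅u, v⁆) =
      ⁅TensorProduct.lid R L (TensorProduct.map φ.toLinearMap LinearMap.id u),
        TensorProduct.lid R L (TensorProduct.map φ.toLinearMap LinearMap.id v)⁆ := by
  induction u using TensorProduct.induction_on with
  | zero => simp
  | tmul s x =>
    induction v using TensorProduct.induction_on with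
    | zero => simp
    | tmul t y => simp [smul_lie, lie_smul, smul_smul, mul_comm]
    | add v₁ v₂ h₁ h₂ => simp [lie_add, h₁, h₂]
  | add u₁ u₂ h₁ h₂ => simp [add_lie, h₁, h₂]

theorem _root_.Polynomial.X_sub_C_dvd_sub_C_mul_X {K : Type*} [Field K] {a : K} (ha : a ≠ 0)
    (p : K[X]) : X - C a ∣ p - C (a⁻¹ * p.eval a) * X := by
  rw [dvd_iff_isRoot]
  simp [mul_right_comm _ _ a, inv_mul_cancel₀ ha]

theorem _root_.Polynomial.X_mul_X_sub_C_dvd_sub_C_mul_X {K : Type*} [Field K] {a : K}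
    (ha : a ≠ 0) {p : K[X]} (hp : X ∣ p) : X * (X - C a) ∣ p - C (a⁻¹ * p.eval a) * X := by
  have hcop : IsCoprime (X : K[X]) (X - C a) := by
    simpa using isCoprime_X_sub_C_of_isUnit_sub (R := K) (a := 0) (b := a) (by simpa using ha)
  exact hcop.mul_dvd (dvd_sub hp (dvd_mul_left X _)) (X_sub_C_dvd_sub_C_mul_X ha p)

theorem ev_tmul (a : ℂ) (p : ℂ[X]) (x : g) : ev g a (p ⊗ₜ x) = aeval a p • x := by
  simp [ev]

theorem ev_lie (a : ℂ) (u v : ℂ[X] ⊗[ℂ] g) : ev g a ⁅u, v⁆ = ⁅ev g a u, ev g a v⁆ :=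
  TensorProduct.lid_map_algHom_lie (aeval a) u v

variable {g}

theorem X_tmul_mem_ntModel (D : TriangularData g) (x : g) : (X : ℂ[X]) ⊗ₜ x ∈ ntModel g D :=
  Submodule.subset_span (Or.inl ⟨1, x, le_rfl, by rw [pow_one]⟩)

theorem NtAlg.ι_mem_ntModel {D : TriangularData g} {nt : Type} [LieRing nt] [LieAlgebra ℂ nt]
    (NT : NtAlg g D nt) (z : nt) : NT.ι z ∈ ntModel g D :=
  NT.range_eq ▸ ⟨z, rfl⟩

theorem tmul_mem_idealI_of_dvd {D : TriangularData g} {f p : ℂ[X]} (h : X * f ∣ p) (x : g) :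
    p ⊗ₜ x ∈ idealI g D f := by
  obtain ⟨q, rfl⟩ := h
  have hx : x ∈ D.nNeg.toSubmodule ⊔ D.H.toSubmodule ⊔ D.nPos.toSubmodule := D.triang ▸ trivial
  obtain ⟨y, hy, z, hz, rfl⟩ := Submodule.mem_sup.mp hx
  rw [TensorProduct.tmul_add]
  refine add_mem (Submodule.subset_span (Or.inr ⟨y, by rwa [sup_comm], q, rfl⟩))
    (Submodule.subset_span (Or.inl ⟨z, hz, X * q, by ring_nf⟩))

theorem tmul_mem_idealI_of_mem_nPos {D : TriangularData g} {f p : ℂ[X]} (h : f ∣ p) {x : g}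
    (hx : x ∈ D.nPos) : p ⊗ₜ x ∈ idealI g D f := by
  obtain ⟨q, rfl⟩ := h
  exact Submodule.subset_span (Or.inl ⟨x, hx, q, rfl⟩)

theorem idealI_le_ker_ev (D : TriangularData g) (a : ℂ) :
    idealI g D (X - C a) ≤ LinearMap.ker (ev g a) := by
  rw [idealI, Submodule.span_le]
  rintro z (⟨x, -, p, rfl⟩ | ⟨x, -, p, rfl⟩) <;> simp [ev_tmul]

theorem sub_X_tmul_ev_mem_idealI (D : TriangularData g) {a : ℂ} (ha : a ≠ 0) {w : ℂ[X] ⊗[ℂ] g}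
    (hw : w ∈ ntModel g D) : w - (X : ℂ[X]) ⊗ₜ (a⁻¹ • ev g a w) ∈ idealI g D (X - C a) := by
  let L := LinearMap.id - TensorProduct.mk ℂ ℂ[X] g X ∘ₗ (a⁻¹ • ev g a)
  have hL (p : ℂ[X]) (x : g) : L (p ⊗ₜ x) = (p - C (a⁻¹ * p.eval a) * X) ⊗ₜ x := by
    simp [L, ev_tmul, TensorProduct.sub_tmul, smul_smul, TensorProduct.smul_tmul', smul_eq_C_mul]
  suffices ntModel g D ≤ (idealI g D (X - C a)).comap L from this hw
  rw [ntModel, Submodule.span_le]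
  rintro z (⟨k, x, hk, rfl⟩ | ⟨x, hx, rfl⟩) <;> rw [SetLike.mem_coe, Submodule.mem_comap, hL]
  · exact tmul_mem_idealI_of_dvd (X_mul_X_sub_C_dvd_sub_C_mul_X ha (dvd_pow_self X (by omega))) x
  · exact tmul_mem_idealI_of_mem_nPos (X_sub_C_dvd_sub_C_mul_X ha 1) hx

theorem statement10_general (g : Type) [LieRing g] [LieAlgebra ℂ g] (D : TriangularData g)
    (nt : Type) [LieRing nt] [LieAlgebra ℂ nt] (NT : NtAlg g D nt)
    (a : ℂ) (ha : a ≠ 0) :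
    Function.Surjective (fun z : nt => ev g a (NT.ι z)) ∧
    (∀ z w : nt, ev g a (NT.ι ⁅z, w⁆) = ⁅ev g a (NT.ι z), ev g a (NT.ι w)⁆) ∧
    (∀ z : nt, ev g a (NT.ι z) = 0 ↔ NT.ι z ∈ idealI g D (X - C a)) := by
  refine ⟨fun x => ?_, fun z w => by rw [LieHom.map_lie, ev_lie],
    fun z => ⟨fun h => ?_, fun h => idealI_le_ker_ev D a h⟩⟩
  · obtain ⟨z, hz⟩ : (X : ℂ[X]) ⊗ₜ (a⁻¹ • x) ∈ LinearMap.range NT.ι.toLinearMap :=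
      NT.range_eq ▸ X_tmul_mem_ntModel D _
    rw [LieHom.coe_toLinearMap] at hz
    exact ⟨z, by simp [hz, ev_tmul, ha]⟩
  · simpa [h] using sub_X_tmul_ev_mem_idealI D ha (NT.ι_mem_ntModel z)

/-- for `a ≠ 0`, the evaluation map `ñ₊ → g`, `x ⊗ p(t) ↦ p(a) x`,
is a surjective Lie algebra homomorphism with kernel `I(t-a)`; hence it induces an
isomorphism `ñ₊ / I(t-a) ≅ g`. -/
theorem statement10 (g : Type) [LieRing g] [LieAlgebra ℂ g] [FiniteDimensional ℂ g]
    [LieAlgebra.IsSimple ℂ g] (D : TriangularData g)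
    (nt : Type) [LieRing nt] [LieAlgebra ℂ nt] (NT : NtAlg g D nt)
    (a : ℂ) (ha : a ≠ 0) :
    Function.Surjective (fun z : nt => ev g a (NT.ι z)) ∧
    (∀ z w : nt, ev g a (NT.ι ⁅z, w⁆) = ⁅ev g a (NT.ι z), ev g a (NT.ι w)⁆) ∧
    (∀ z : nt, ev g a (NT.ι z) = 0 ↔ NT.ι z ∈ idealI g D (X - C a)) :=
  statement10_general g D nt NT a ha

end AffinePaper
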